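/- The exchange matrix R_k(u,λ) = R_{ℂⁿ,ℂⁿ}(u,λ,k) satisfies the periodicity relation R_k(u+1, λ) = e^{2πi(Δ_k(λ−h^{(2)}) − Δ_k(λ−h^{(1)}−h^{(2)}))} R_k(u,λ) e^{−2πi(Δ_k(λ) − Δ_k(λ−h^{(1)}))}, where for a scalar function f of λ, f(λ − h^{(i)}) acts on a vector whose i-th tensor factor has weight μ_i as multiplication by f(λ − μ_i). -/
import Mathlib


noncomputable section

open Complex Matrix Finset

/-- The dual Cartan subalgebra 𝔥* of 𝔰𝔩_n, realized as the sum-zero hyperplane in ℂⁿ. -/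
def Hs (n : ℕ) : Submodule ℂ (Fin n → ℂ) where
  carrier := {v | ∑ i, v i = 0}
  add_mem' := by
    intro a b ha hb
    simp only [Set.mem_setOf_eq, Pi.add_apply] at *
    simp [Finset.sum_add_distrib, ha, hb]
  zero_mem' := by simp
  smul_mem' := by
    intro c a ha
    simp only [Set.mem_setOf_eq, Pi.smul_apply, smul_eq_mul] at *
    simp [← Finset.mul_sum, ha]

/-- Elements of 𝔥*. -/
abbrev HW (n : ℕ) := ↥(Hs n)

lemma sum_id_complex (n : ℕ) : ∑ i ∈ Finset.range n, (i : ℂ) = n * (n - 1) / 2 := by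
  induction n with
  | zero => simp
  | succ m ih => rw [Finset.sum_range_succ, ih]; push_cast; ring

/-- ρ, the half sum of positive roots of 𝔰𝔩_n. -/
def rho (n : ℕ) : HW n :=
  ⟨fun i => ((n : ℂ) - 1) / 2 - (i : ℂ), by
    have h1 : ∑ i : Fin n, ((i : ℕ) : ℂ) = (n : ℂ) * ((n : ℂ) - 1) / 2 := by
      rw [Fin.sum_univ_eq_sum_range (fun m => ((m : ℕ) : ℂ))]
      exact sum_id_complex n
    show ∑ i : Fin n, (((n : ℂ) - 1) / 2 - (i : ℂ)) = 0
    rw [Finset.sum_sub_distrib, Finset.sum_const, Finset.card_univ, Fintype.card_fin, h1]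
    ring⟩

/-- The standard invariant bilinear form (a,b) = tr(ab) on (the ambient space of) 𝔥*. -/
def ip {n : ℕ} (a b : Fin n → ℂ) : ℂ := ∑ i, a i * b i

/-- Δ_k(λ) = (λ, λ + 2ρ)/(2(k + ȟ)), ȟ = n the dual Coxeter number of 𝔰𝔩_n. -/
def Dlt (n : ℕ) (k : ℂ) (lam : HW n) : ℂ :=
  ip (lam : Fin n → ℂ) ((lam : Fin n → ℂ) + (2 : ℂ) • (rho n : Fin n → ℂ)) / (2 * (k + n))

/-- q^a := e^{a log q}, for the fixed value lq of log q. -/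
def qpow (lq a : ℂ) : ℂ := Complex.exp (a * lq)

/-- An object of Rep_f(U): a finite-dimensional module with a weight decomposition,
recorded via a (weight) basis indexed by `I` together with the weight of each basis vector. -/
structure WtRep (n : ℕ) where
  I : Type
  [fI : Fintype I]
  [dI : DecidableEq I]
  wt : I → HW n

attribute [instance] WtRep.fI WtRep.dI

/-- The weights of the standard vector representation ℂⁿ of 𝔰𝔩_n. -/
def vecWt (n : ℕ) [NeZero n] (i : Fin n) : HW n :=
  ⟨fun j => (if j = i then 1 else 0) - 1 / n, by
    have hn : (n : ℂ) ≠ 0 := Nat.cast_ne_zero.mpr (NeZero.ne n)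
    show ∑ j : Fin n, ((if j = i then (1:ℂ) else 0) - 1 / n) = 0
    rw [Finset.sum_sub_distrib]
    have h1 : ∑ j : Fin n, (if j = i then (1:ℂ) else 0) = 1 := by simp
    rw [h1, Finset.sum_const, Finset.card_univ, Fintype.card_fin, nsmul_eq_mul,
      mul_one_div, div_self hn, sub_self]⟩

/-- The standard vector representation ℂⁿ. -/
def vrep (n : ℕ) [NeZero n] : WtRep n := ⟨Fin n, vecWt n⟩

variable {n : ℕ}

/-- Operators on the tensor product V ⊗ W, in the weight bases. -/
abbrev Op (V W : WtRep n) := Matrix (V.I × W.I) (V.I × W.I) ℂ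

/-- The flip A²¹ of an operator on W ⊗ V, viewed as an operator on V ⊗ W. -/
def flipOp (V W : WtRep n) (A : Op W V) : Op V W := fun p q => A (p.2, p.1) (q.2, q.1)

/-- A^{12}(λ - c·h^{(3)}) acting on V ⊗ W ⊗ X for a dynamical operator A on V ⊗ W. -/
def d12 (V W X : WtRep n) (A : HW n → Op V W) (c : ℂ) (lam : HW n) :
    Matrix (V.I × W.I × X.I) (V.I × W.I × X.I) ℂ :=
  fun p q => if p.2.2 = q.2.2 then A (lam - c • X.wt p.2.2) (p.1, p.2.1) (q.1, q.2.1) else 0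

/-- A^{13}(λ - c·h^{(2)}) acting on V ⊗ W ⊗ X for a dynamical operator A on V ⊗ X. -/
def d13 (V W X : WtRep n) (A : HW n → Op V X) (c : ℂ) (lam : HW n) :
    Matrix (V.I × W.I × X.I) (V.I × W.I × X.I) ℂ :=
  fun p q => if p.2.1 = q.2.1 then A (lam - c • W.wt p.2.1) (p.1, p.2.2) (q.1, q.2.2) else 0

/-- A^{23}(λ - c·h^{(1)}) acting on V ⊗ W ⊗ X for a dynamical operator A on W ⊗ X. -/
def d23 (V W X : WtRep n) (A : HW n → Op W X) (c : ℂ) (lam : HW n) :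
    Matrix (V.I × W.I × X.I) (V.I × W.I × X.I) ℂ :=
  fun p q => if p.1 = q.1 then A (lam - c • V.wt p.1) p.2 q.2 else 0

/-- The data of the quantum affine algebra constructions of Section 1:
the meromorphically continued R-matrices ℛ_{V,W}(z), the functions F^{v,w}_{λ,k}(z)
coming from the factorization of the quantum correlation functions
Ψ^{v,w}_{λ,k}(z₁,z₂) = z₁^{-Δ₁} z₂^{-Δ₂} F^{v,w}_{λ,k}(z₂/z₁), and the fusion matrices
(qKZ twists) J_{V,W}(u₁,u₂,λ,k) : v ⊗ w ↦ e^{-2πi(Δ₁u₁+Δ₂u₂)} F^{v,w}_{λ,k}(e^{2πi(u₂-u₁)}). -/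
structure ExchangeSetting (n : ℕ) (lq : ℂ) where
  /-- ℛ_{V,W}(z), the universal R-matrix evaluated on V(z₁) ⊗ W(z₂), z = z₁/z₂,
  meromorphically continued. -/
  Rmat : (V W : WtRep n) → ℂ → Op V W
  /-- F^{v,w}_{λ,k}(z), as operator-valued function (columns indexed by input v ⊗ w). -/
  Fm : (V W : WtRep n) → HW n → ℂ → ℂ → Op V W
  /-- The fusion matrix J_{V,W}(u₁,u₂,λ,k). -/
  J : (V W : WtRep n) → ℂ → ℂ → HW n → ℂ → Op V W
  /-- J(u₁,u₂,λ,k)(v⊗w) = e^{-2πi(Δ₁u₁+Δ₂u₂)} F^{v,w}_{λ,k}(e^{2πi(u₂-u₁)}), where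
  Δ₁ = Δ_k(λ-ν) - Δ_k(λ-ν-μ), Δ₂ = Δ_k(λ) - Δ_k(λ-ν) for v of weight μ, w of weight ν. -/
  J_eq : ∀ (V W : WtRep n) (u1 u2 : ℂ) (lam : HW n) (k : ℂ) p q,
    J V W u1 u2 lam k p q =
      Complex.exp (-(2 * Real.pi * Complex.I) *
        ((Dlt n k (lam - W.wt q.2) - Dlt n k (lam - W.wt q.2 - V.wt q.1)) * u1 +
         (Dlt n k lam - Dlt n k (lam - W.wt q.2)) * u2)) *
      Fm V W lam k (Complex.exp (2 * Real.pi * Complex.I * (u2 - u1))) p q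
  /-- F is of total weight zero. -/
  Fm_wt : ∀ V W lam k z p q, Fm V W lam k z p q ≠ 0 →
    V.wt p.1 + W.wt p.2 = V.wt q.1 + W.wt q.2
  /-- ℛ is of total weight zero. -/
  Rmat_wt : ∀ V W z p q, Rmat V W z p q ≠ 0 → V.wt p.1 + W.wt p.2 = V.wt q.1 + W.wt q.2
  /-- F^{v,w}_{λ,k}(z) is meromorphic in z and regular at the origin. -/
  Fm_mero : ∀ V W lam k p q, MeromorphicOn (fun z => Fm V W lam k z p q) Set.univ
  Fm_reg : ∀ V W lam k p q, AnalyticAt ℂ (fun z => Fm V W lam k z p q) 0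
  /-- ℛ_{V,W}(z) is meromorphic in z. -/
  Rmat_mero : ∀ V W p q, MeromorphicOn (fun z => Rmat V W z p q) Set.univ

/-- The exchange matrix
R_{V,W}(u₁,u₂,λ,k) = J_{V,W}(u₁,u₂,λ,k)⁻¹ ℛ²¹_{W,V}(e^{2πi(u₂-u₁)}) J²¹_{W,V}(u₂,u₁,λ,k). -/
def Rex {lq : ℂ} (S : ExchangeSetting n lq) (V W : WtRep n) (u1 u2 : ℂ) (lam : HW n) (k : ℂ) :
    Op V W :=
  (S.J V W u1 u2 lam k)⁻¹ *
    flipOp V W (S.Rmat W V (Complex.exp (2 * Real.pi * Complex.I * (u2 - u1)))) *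
    flipOp V W (S.J W V u2 u1 lam k)

/-- R_{V,W}(u,λ,k), the exchange matrix as a function of u = u₁ - u₂. -/
def RexD {lq : ℂ} (S : ExchangeSetting n lq) (V W : WtRep n) (u : ℂ) (lam : HW n) (k : ℂ) :
    Op V W :=
  Rex S V W u 0 lam k

/-- **Lemma 1, part 2.** The exchange matrix R_k(u,λ) = R_{ℂⁿ,ℂⁿ}(u,λ,k)
satisfies the periodicity relation
R_k(u+1,λ) = e^{2πi(Δ_k(λ-h⁽²⁾) - Δ_k(λ-h⁽¹⁾-h⁽²⁾))} R_k(u,λ) e^{-2πi(Δ_k(λ) - Δ_k(λ-h⁽¹⁾))},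
where a scalar function f(λ - h⁽ⁱ⁾) acts on a vector whose i-th tensor factor has weight μᵢ
as multiplication by f(λ - μᵢ). -/
theorem exchange_matrix_periodicity
    (n : ℕ) [NeZero n] (lq : ℂ) (hq : ∀ m : ℕ, 0 < m → Complex.exp lq ^ m ≠ 1)
    (S : ExchangeSetting n lq) (u : ℂ) (lam : HW n) (k : ℂ) :
    RexD S (vrep n) (vrep n) (u + 1) lam k =
      Matrix.diagonal (fun p : (vrep n).I × (vrep n).I =>
          Complex.exp ((2 * Real.pi * Complex.I) *
            (Dlt n k (lam - (vrep n).wt p.2) - Dlt n k (lam - (vrep n).wt p.1 - (vrep n).wt p.2)))) *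
        RexD S (vrep n) (vrep n) u lam k *
        Matrix.diagonal (fun p : (vrep n).I × (vrep n).I =>
          Complex.exp (-(2 * Real.pi * Complex.I) *
            (Dlt n k lam - Dlt n k (lam - (vrep n).wt p.1)))) := by
  set V := vrep n with hV
  -- Shift of the first spectral parameter in J
  have hJ1 : S.J V V (u + 1) 0 lam k =
      S.J V V u 0 lam k *
        Matrix.diagonal (fun q : V.I × V.I =>
          Complex.exp (-(2 * Real.pi * Complex.I) *
            (Dlt n k (lam - V.wt q.2) - Dlt n k (lam - V.wt q.2 - V.wt q.1)))) := by
    funext p q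
    rw [Matrix.mul_diagonal, S.J_eq, S.J_eq]
    have harg : Complex.exp (2 * Real.pi * Complex.I * ((0 : ℂ) - (u + 1)))
        = Complex.exp (2 * Real.pi * Complex.I * ((0 : ℂ) - u)) := by
      rw [show (2 * Real.pi * Complex.I * ((0 : ℂ) - (u + 1)))
          = 2 * Real.pi * Complex.I * ((0 : ℂ) - u) + -(2 * Real.pi * Complex.I) by ring,
        Complex.exp_add, Complex.exp_neg, Complex.exp_two_pi_mul_I]
      simp
    rw [harg]
    have hsplit : Complex.exp (-(2 * Real.pi * Complex.I) *
          ((Dlt n k (lam - V.wt q.2) - Dlt n k (lam - V.wt q.2 - V.wt q.1)) * (u + 1) +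
           (Dlt n k lam - Dlt n k (lam - V.wt q.2)) * 0))
        = Complex.exp (-(2 * Real.pi * Complex.I) *
            ((Dlt n k (lam - V.wt q.2) - Dlt n k (lam - V.wt q.2 - V.wt q.1)) * u +
             (Dlt n k lam - Dlt n k (lam - V.wt q.2)) * 0)) *
          Complex.exp (-(2 * Real.pi * Complex.I) *
            (Dlt n k (lam - V.wt q.2) - Dlt n k (lam - V.wt q.2 - V.wt q.1))) := by
      rw [← Complex.exp_add]; congr 1; ring
    rw [hsplit]; ring
  -- Shift of the second spectral parameter in J
  have hJ2 : S.J V V 0 (u + 1) lam k =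
      S.J V V 0 u lam k *
        Matrix.diagonal (fun q : V.I × V.I =>
          Complex.exp (-(2 * Real.pi * Complex.I) *
            (Dlt n k lam - Dlt n k (lam - V.wt q.2)))) := by
    funext p q
    rw [Matrix.mul_diagonal, S.J_eq, S.J_eq]
    have harg : Complex.exp (2 * Real.pi * Complex.I * ((u + 1) - 0))
        = Complex.exp (2 * Real.pi * Complex.I * (u - 0)) := by
      rw [show (2 * Real.pi * Complex.I * ((u + 1) - 0))
          = 2 * Real.pi * Complex.I * (u - 0) + 2 * Real.pi * Complex.I by ring,
        Complex.exp_add, Complex.exp_two_pi_mul_I]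
      simp
    rw [harg]
    have hsplit : Complex.exp (-(2 * Real.pi * Complex.I) *
          ((Dlt n k (lam - V.wt q.2) - Dlt n k (lam - V.wt q.2 - V.wt q.1)) * 0 +
           (Dlt n k lam - Dlt n k (lam - V.wt q.2)) * (u + 1)))
        = Complex.exp (-(2 * Real.pi * Complex.I) *
            ((Dlt n k (lam - V.wt q.2) - Dlt n k (lam - V.wt q.2 - V.wt q.1)) * 0 +
             (Dlt n k lam - Dlt n k (lam - V.wt q.2)) * u)) *
          Complex.exp (-(2 * Real.pi * Complex.I) *
            (Dlt n k lam - Dlt n k (lam - V.wt q.2))) := by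
      rw [← Complex.exp_add]; congr 1; ring
    rw [hsplit]; ring
  -- The R-matrix argument is unchanged under the shift
  have hR : Complex.exp (2 * Real.pi * Complex.I * ((0 : ℂ) - (u + 1)))
      = Complex.exp (2 * Real.pi * Complex.I * ((0 : ℂ) - u)) := by
    rw [show (2 * Real.pi * Complex.I * ((0 : ℂ) - (u + 1)))
        = 2 * Real.pi * Complex.I * ((0 : ℂ) - u) + -(2 * Real.pi * Complex.I) by ring,
      Complex.exp_add, Complex.exp_neg, Complex.exp_two_pi_mul_I]
    simp
  -- flip of a product with a diagonal
  have hflip : ∀ (A : Op V V) (d : V.I × V.I → ℂ),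
      flipOp V V (A * Matrix.diagonal d)
        = flipOp V V A * Matrix.diagonal (fun q : V.I × V.I => d (q.2, q.1)) := by
    intro A d
    funext p q
    simp [flipOp, Matrix.mul_diagonal]
  -- inverse of the diagonal factor
  have hinv : (Matrix.diagonal (fun q : V.I × V.I =>
        Complex.exp (-(2 * Real.pi * Complex.I) *
          (Dlt n k (lam - V.wt q.2) - Dlt n k (lam - V.wt q.2 - V.wt q.1)))))⁻¹
      = Matrix.diagonal (fun p : V.I × V.I =>
          Complex.exp ((2 * Real.pi * Complex.I) *
            (Dlt n k (lam - V.wt p.2) - Dlt n k (lam - V.wt p.1 - V.wt p.2)))) := by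
    apply Matrix.inv_eq_right_inv
    rw [Matrix.diagonal_mul_diagonal]
    rw [show (1 : Op V V) = Matrix.diagonal (fun _ : V.I × V.I => (1 : ℂ)) from
      (Matrix.diagonal_one).symm]
    refine congrArg Matrix.diagonal (funext fun q => ?_)
    rw [← Complex.exp_add, ← Complex.exp_zero]
    congr 1
    rw [sub_right_comm lam (V.wt q.2) (V.wt q.1)]
    ring
  show Rex S V V (u + 1) 0 lam k = _ * Rex S V V u 0 lam k * _
  rw [Rex, Rex, hJ1, hJ2, hR, hflip, Matrix.mul_inv_rev, hinv]
  simp only [Matrix.mul_assoc]
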